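/- arXiv:2105.05569 — 6 statements merged into one kernel-verified Lean document; each statement's English description precedes it below -/
import Mathlib

section
/- If L is a uniformly convex real Banach space, then its unit sphere has the uniform separation property: for every ε ∈ (0,2] there exists ϖ(ε) > 0 such that for every x in the unit sphere S_L there exists a continuous linear functional p in the dual unit sphere with ⟨p, x⟩ - ϖ(ε) ≥ ⟨p, y⟩ for all y ∈ S_L with ‖x - y‖ ≥ ε. -/
open Metric Set Filter

/- Take `ϖ = δ ε` and let `p` be a norming functional of `x`. For `y` at distance at least `ε`,
uniform convexity gives `‖x + y‖ ≤ 2 (1 - δ ε)`, so `p y = p (x + y) - 1 ≤ 1 - 2 δ ε`. -/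

section MidpointDefect

variable {E : Type*} [SeminormedAddCommGroup E] [NormedSpace ℝ E]

variable (E) in
/-- The values `1 - ‖(x + y) / 2‖` over pairs of unit vectors at distance at least `ε`; the
modulus of convexity at `ε` is their infimum. -/
def midpointDefects (ε : ℝ) : Set ℝ :=
  (fun xy : E × E => 1 - ‖(2⁻¹ : ℝ) • (xy.1 + xy.2)‖) ''
    {xy : E × E | ‖xy.1‖ = 1 ∧ ‖xy.2‖ = 1 ∧ ε ≤ ‖xy.1 - xy.2‖}

lemma norm_half_smul_add (x y : E) : ‖(2⁻¹ : ℝ) • (x + y)‖ = ‖x + y‖ / 2 := by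
  rw [norm_smul, Real.norm_of_nonneg (by norm_num)]
  ring

lemma midpointDefects_nonneg {ε t : ℝ} (ht : t ∈ midpointDefects E ε) : 0 ≤ t := by
  obtain ⟨⟨x, y⟩, ⟨hx, hy, -⟩, rfl⟩ := ht
  have : ‖x + y‖ ≤ 2 := by linarith [norm_add_le x y]
  simp only [norm_half_smul_add]
  linarith

lemma norm_add_le_two_mul_one_sub_sInf_midpointDefects {ε : ℝ} {x y : E}
    (hx : ‖x‖ = 1) (hy : ‖y‖ = 1) (hxy : ε ≤ ‖x - y‖) :
    ‖x + y‖ ≤ 2 * (1 - sInf (midpointDefects E ε)) := by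
  have hbdd : BddBelow (midpointDefects E ε) := ⟨0, fun _ ↦ midpointDefects_nonneg⟩
  have hle := csInf_le hbdd ⟨(x, y), ⟨hx, hy, hxy⟩, rfl⟩
  simp only [norm_half_smul_add] at hle
  linarith

end MidpointDefect

theorem sphere_uniform_separation_property_general
    {L : Type*} [NormedAddCommGroup L] [NormedSpace ℝ L]
    (δ : ℝ → ℝ)
    (hδdef : ∀ ε : ℝ, δ ε = sInf ((fun xy : L × L => 1 - ‖(2⁻¹ : ℝ) • (xy.1 + xy.2)‖) ''
      {xy : L × L | ‖xy.1‖ = 1 ∧ ‖xy.2‖ = 1 ∧ ε ≤ ‖xy.1 - xy.2‖}))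
    (hconv : ∀ ε ∈ Set.Ioc (0 : ℝ) 2, 0 < δ ε) :
    ∀ ε ∈ Set.Ioc (0 : ℝ) 2, ∃ ϖ > (0 : ℝ), ∀ x : L, ‖x‖ = 1 →
      ∃ p : StrongDual ℝ L, ‖p‖ = 1 ∧
        ∀ y : L, ‖y‖ = 1 → ε ≤ ‖x - y‖ → p y ≤ p x - ϖ := by
  intro ε hε
  refine ⟨δ ε, hconv ε hε, fun x hx ↦ ?_⟩
  obtain ⟨p, hp, hpx⟩ := exists_dual_vector ℝ x (by simp [hx])
  refine ⟨p, hp, fun y hy hxy ↦ ?_⟩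
  have hpx : p x = 1 := by simp [hpx, hx]
  have hsum : ‖x + y‖ ≤ 2 * (1 - δ ε) := by
    rw [hδdef]
    exact norm_add_le_two_mul_one_sub_sInf_midpointDefects hx hy hxy
  have hpsum : p (x + y) ≤ ‖x + y‖ := by
    simpa [hp] using (le_abs_self _).trans (p.le_opNorm (x + y))
  rw [map_add] at hpsum
  linarith [hconv ε hε]

/-- If `L` is a uniformly convex real Banach space (expressed via positivity of the
modulus of convexity `δ`), then its unit sphere has the uniform separation property. -/
theorem sphere_uniform_separation_property
    {L : Type*} [NormedAddCommGroup L] [NormedSpace ℝ L] [CompleteSpace L]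
    (δ : ℝ → ℝ)
    (hδdef : ∀ ε : ℝ, δ ε = sInf ((fun xy : L × L => 1 - ‖(2⁻¹ : ℝ) • (xy.1 + xy.2)‖) ''
      {xy : L × L | ‖xy.1‖ = 1 ∧ ‖xy.2‖ = 1 ∧ ε ≤ ‖xy.1 - xy.2‖}))
    (hconv : ∀ ε ∈ Set.Ioc (0 : ℝ) 2, 0 < δ ε) :
    ∀ ε ∈ Set.Ioc (0 : ℝ) 2, ∃ ϖ > (0 : ℝ), ∀ x : L, ‖x‖ = 1 →
      ∃ p : StrongDual ℝ L, ‖p‖ = 1 ∧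
        ∀ y : L, ‖y‖ = 1 → ε ≤ ‖x - y‖ → p y ≤ p x - ϖ :=
  sphere_uniform_separation_property_general δ hδdef hconv
end

section
/- Let X be a Banach space and C a norm-bounded subset of X*. Suppose (C, γ) is a complete pseudometric space having the w*-uniform separation property in X*. Let f : C → ℝ ∪ {+∞} be any proper function bounded from below. Then for each n ≥ 1, the set O_n := {x ∈ X : ∃ p_n ∈ C with f(p_n) + ⟨p_n, x⟩ < inf{f(p) + ⟨p, x⟩ : p ∈ C, γ(p, p_n) ≥ 1/n}} is the complement of a porous set in X. -/
open Metric Set Filter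

/-!
Fix `x` and `r`. Since `C` is bounded and `f` is proper and bounded below, `p ↦ f p + p x` has a
finite infimum on `C`; take an `rϖ/8`-minimiser `pₙ`, and let `u` in the unit ball separate `pₙ` by
`ϖ` from every `q` with `γ q pₙ ≥ min (1/n) a` (w*-USP). Moving from `x` to `y = x - (r/2) • u`
raises `f q + q ·` against `f pₙ + pₙ ·` by `rϖ/2` for every such `q`, while on the ball
`B(y, l r)` with `l = min (1/2) (ϖ/(8D))` the perturbation costs at most `rϖ/4`. So `pₙ` stays a
strict minimiser there, and this ball lies in `B(x, r) ∩ Oₙ`.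
-/

def Porous {X : Type*} [MetricSpace X] (A : Set X) : Prop :=
  ∃ l : ℝ, l ∈ Set.Ioc (0 : ℝ) 1 ∧ ∃ r₀ > (0 : ℝ), ∀ x : X, ∀ r ∈ Set.Ioc (0 : ℝ) r₀,
    ∃ y : X, Metric.ball y (l * r) ⊆ Metric.ball x r ∩ Aᶜ

namespace EReal

lemma add_coe_add_coe_sub (e : EReal) (a b : ℝ) : e + a + ((b - a : ℝ) : EReal) = e + b := by
  rw [add_assoc, ← coe_add, add_sub_cancel]

lemma coe_add_le_add_coe {G : EReal} {c α β δ : ℝ} (h : (c : EReal) ≤ G + δ)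
    (hαβ : α + δ ≤ β) : ((c + α : ℝ) : EReal) ≤ G + β :=
  calc ((c + α : ℝ) : EReal) = c + α := coe_add _ _
    _ ≤ G + δ + α := add_le_add_left h _
    _ = G + ((δ + α : ℝ) : EReal) := by rw [add_assoc, coe_add]
    _ ≤ G + β := by gcongr; exact_mod_cast (by linarith)

lemma exists_mem_eq_coe_forall_le_add {α : Type*} {s : Set α} {g : α → EReal}
    (hne : ∃ a ∈ s, g a ≠ ⊤) (hbdd : ∃ m : ℝ, ∀ a ∈ s, (m : EReal) ≤ g a) {δ : ℝ} (hδ : 0 < δ) :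
    ∃ a ∈ s, ∃ c : ℝ, g a = c ∧ ∀ b ∈ s, (c : EReal) ≤ g b + δ := by
  obtain ⟨a₀, ha₀, hga₀⟩ := hne
  obtain ⟨m, hm⟩ := hbdd
  have hm_le : (m : EReal) ≤ sInf (g '' s) := le_sInf <| by rintro _ ⟨a, ha, rfl⟩; exact hm a ha
  have h_le : sInf (g '' s) ≤ g a₀ := sInf_le ⟨a₀, ha₀, rfl⟩
  lift sInf (g '' s) to ℝ using ⟨(h_le.trans_lt (lt_top_iff_ne_top.2 hga₀)).ne,
    ((bot_lt_coe m).trans_le hm_le).ne'⟩ with i hi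
  have hlt : sInf (g '' s) < (i + δ : ℝ) := by rw [← hi]; exact_mod_cast lt_add_of_pos_right i hδ
  obtain ⟨_, ⟨a, ha, rfl⟩, hga⟩ := sInf_lt_iff.1 hlt
  lift g a to ℝ using ⟨(hga.trans (coe_lt_top _)).ne, ((bot_lt_coe m).trans_le (hm a ha)).ne'⟩
    with c hc
  refine ⟨a, ha, c, hc.symm, fun b hb => ?_⟩
  calc (c : EReal) ≤ (i + δ : ℝ) := hga.le
    _ = i + δ := coe_add _ _
    _ ≤ g b + δ := add_le_add_left (hi ▸ sInf_le (mem_image_of_mem g hb)) _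

lemma add_lt_sInf_image_add {α : Type*} {φ : α → EReal} {ℓ₀ ℓ₁ : α → ℝ} {S : Set α} {a : α}
    {c δ ε : ℝ} (hε : 0 < ε) (hc : φ a + ℓ₀ a = c) (hmin : ∀ q ∈ S, (c : EReal) ≤ φ q + ℓ₀ q + δ)
    (hgap : ∀ q ∈ S, ℓ₁ a - ℓ₀ a + ε + δ ≤ ℓ₁ q - ℓ₀ q) :
    φ a + ℓ₁ a < sInf ((fun q => φ q + ℓ₁ q) '' S) := by
  have hval : φ a + ℓ₁ a = ((c + (ℓ₁ a - ℓ₀ a) : ℝ) : EReal) := by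
    rw [← add_coe_add_coe_sub _ (ℓ₀ a), hc, ← coe_add]
  calc φ a + ℓ₁ a < ((c + (ℓ₁ a - ℓ₀ a + ε) : ℝ) : EReal) := by
        rw [hval]; exact_mod_cast (by linarith)
    _ ≤ sInf ((fun q => φ q + ℓ₁ q) '' S) := le_sInf <| by
        rintro _ ⟨q, hq, rfl⟩
        dsimp only
        rw [← add_coe_add_coe_sub (φ q) (ℓ₀ q)]
        exact coe_add_le_add_coe (hmin q hq) (hgap q hq)

end EReal

section StrongDual

variable {E : Type*} [SeminormedAddCommGroup E] [NormedSpace ℝ E]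

lemma exists_coe_le_add_apply {C : Set (StrongDual ℝ E)} {f : StrongDual ℝ E → EReal} {D : ℝ}
    (hCD : ∀ p ∈ C, ‖p‖ ≤ D) (hbelow : ∃ m : ℝ, ∀ p ∈ C, (m : EReal) ≤ f p) (x : E) :
    ∃ m : ℝ, ∀ p ∈ C, (m : EReal) ≤ f p + p x := by
  obtain ⟨m, hm⟩ := hbelow
  refine ⟨m + -(D * ‖x‖), fun p hp => ?_⟩
  have hpx : -(D * ‖x‖) ≤ p x := neg_le_of_abs_le (p.le_of_opNorm_le (hCD p hp) x)
  rw [EReal.coe_add]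
  exact add_le_add (hm p hp) (EReal.coe_le_coe_iff.2 hpx)

lemma apply_sub_apply_add_le {p q : StrongDual ℝ E} {D ϖ t : ℝ} (hp : ‖p‖ ≤ D) (hq : ‖q‖ ≤ D)
    (ht : 0 ≤ t) {u : E} (hu : q u ≤ p u - ϖ) (x z : E) :
    p z - p x + t * ϖ ≤ q z - q x + 2 * D * ‖z - (x - t • u)‖ := by
  set w := z - (x - t • u)
  have hz : z = x - t • u + w := by simp [w]
  have hpw := abs_le.1 (p.le_of_opNorm_le hp w)
  have hqw := abs_le.1 (q.le_of_opNorm_le hq w)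
  have htu : t * q u ≤ t * (p u - ϖ) := mul_le_mul_of_nonneg_left hu ht
  simp only [hz, map_add, map_sub, map_smul, smul_eq_mul]
  linarith

end StrongDual

theorem On_complement_of_porous_general
    {X : Type*} [NormedAddCommGroup X] [NormedSpace ℝ X]
    (C : Set (StrongDual ℝ X))
    (γ : StrongDual ℝ X → StrongDual ℝ X → ℝ)
    (hbdd : ∃ D : ℝ, ∀ p ∈ C, ‖p‖ ≤ D)
    (hUSP : ∃ a > (0 : ℝ), ∀ ε ∈ Set.Ioc (0 : ℝ) a, ∃ ϖ > (0 : ℝ), ∀ p ∈ C,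
      ∃ x : X, ‖x‖ ≤ 1 ∧ ∀ q ∈ C, ε ≤ γ q p → q x ≤ p x - ϖ)
    (f : StrongDual ℝ X → EReal)
    (hproper : ∃ p ∈ C, f p ≠ ⊤)
    (hbelow : ∃ m : ℝ, ∀ p ∈ C, (m : EReal) ≤ f p)
    (n : ℕ) (hn : 1 ≤ n) :
    Porous ({x : X | ∃ pn ∈ C, f pn + ((pn x : ℝ) : EReal) <
      sInf ((fun p => f p + ((p x : ℝ) : EReal)) ''
        {p | p ∈ C ∧ (1 : ℝ) / n ≤ γ p pn})}ᶜ) := by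
  obtain ⟨D, hD, hCD⟩ : ∃ D > 0, ∀ p ∈ C, ‖p‖ ≤ D :=
    let ⟨D, h⟩ := hbdd
    ⟨max D 1, by positivity, fun p hp => (h p hp).trans (le_max_left _ _)⟩
  obtain ⟨a, ha, hUSP⟩ := hUSP
  have hn_pos : (0 : ℝ) < 1 / n := one_div_pos.2 (by exact_mod_cast hn)
  obtain ⟨ϖ, hϖ, hsep⟩ := hUSP (min (1 / n) a) ⟨lt_min hn_pos ha, min_le_right _ _⟩
  set l := min (1 / 2 : ℝ) (ϖ / (8 * D))
  have hl : l * (8 * D) ≤ ϖ := (le_div_iff₀ (by positivity)).1 (min_le_right _ _)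
  refine ⟨l, ⟨by positivity, (min_le_left _ _).trans (by norm_num)⟩, 1, one_pos,
    fun x r ⟨hr, _⟩ => ?_⟩
  obtain ⟨pn, hpn, c, hc, hmin⟩ :=
    EReal.exists_mem_eq_coe_forall_le_add (g := fun p => f p + (p x : EReal))
      (let ⟨p, hp, h⟩ := hproper; ⟨p, hp, EReal.add_ne_top h (EReal.coe_ne_top _)⟩)
      (exists_coe_le_add_apply hCD hbelow x) (δ := r * ϖ / 8) (by positivity)
  obtain ⟨u, hu, hpu⟩ := hsep pn hpn
  refine ⟨x - (r / 2) • u, fun z hz => ⟨ball_subset_ball' ?_ hz, not_not.2 ⟨pn, hpn, ?_⟩⟩⟩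
  · rw [dist_self_sub_left, norm_smul, Real.norm_of_nonneg (by positivity)]
    nlinarith [min_le_left (1 / 2 : ℝ) (ϖ / (8 * D))]
  · refine EReal.add_lt_sInf_image_add (ℓ₀ := fun p : StrongDual ℝ X => p x)
      (ℓ₁ := fun p => p z) (δ := r * ϖ / 8) (ε := r * ϖ / 8) (by positivity) hc ?_ ?_
    · exact fun q hq => hmin q hq.1
    rintro q ⟨hq, hγ⟩
    have hgap := apply_sub_apply_add_le (hCD pn hpn) (hCD q hq) (by positivity : 0 ≤ r / 2)
      (hpu q hq ((min_le_left _ _).trans hγ)) x z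
    have hw : 2 * D * ‖z - (x - (r / 2) • u)‖ ≤ r * ϖ / 4 := by
      have hzy := mem_ball_iff_norm.1 hz
      nlinarith
    linarith

/-- under the w*-USP hypothesis on the complete pseudometric space `(C,γ)`, each set
`Oₙ` (the set of `x ∈ X` for which there is `pₙ ∈ C` with
`f(pₙ) + ⟨pₙ,x⟩ < inf{f(p)+⟨p,x⟩ : p ∈ C, γ(p,pₙ) ≥ 1/n}`) is the complement of a porous set. -/
theorem On_complement_of_porous
    {X : Type*} [NormedAddCommGroup X] [NormedSpace ℝ X] [CompleteSpace X]
    (C : Set (StrongDual ℝ X))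
    (γ : StrongDual ℝ X → StrongDual ℝ X → ℝ)
    (hbdd : ∃ D : ℝ, ∀ p ∈ C, ‖p‖ ≤ D)
    (hγ0 : ∀ p ∈ C, γ p p = 0)
    (hγsymm : ∀ p ∈ C, ∀ q ∈ C, γ p q = γ q p)
    (hγtri : ∀ p ∈ C, ∀ q ∈ C, ∀ r ∈ C, γ p q ≤ γ p r + γ r q)
    (hcomplete : ∀ u : ℕ → StrongDual ℝ X, (∀ n, u n ∈ C) →
      (∀ ε > (0 : ℝ), ∃ N : ℕ, ∀ m ≥ N, ∀ n ≥ N, γ (u m) (u n) < ε) →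
      ∃ l ∈ C, Tendsto (fun n => γ (u n) l) atTop (nhds 0))
    (hUSP : ∃ a > (0 : ℝ), ∀ ε ∈ Set.Ioc (0 : ℝ) a, ∃ ϖ > (0 : ℝ), ∀ p ∈ C,
      ∃ x : X, ‖x‖ ≤ 1 ∧ ∀ q ∈ C, ε ≤ γ q p → q x ≤ p x - ϖ)
    (f : StrongDual ℝ X → EReal)
    (hproper : ∃ p ∈ C, f p ≠ ⊤)
    (hbelow : ∃ m : ℝ, ∀ p ∈ C, (m : EReal) ≤ f p)
    (n : ℕ) (hn : 1 ≤ n) :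
    Porous ({x : X | ∃ pn ∈ C, f pn + ((pn x : ℝ) : EReal) <
      sInf ((fun p => f p + ((p x : ℝ) : EReal)) ''
        {p | p ∈ C ∧ (1 : ℝ) / n ≤ γ p pn})}ᶜ) :=
  On_complement_of_porous_general C γ hbdd hUSP f hproper hbelow n hn
end

section
/- Let X be a Banach space and C a norm-bounded subset of X*. Suppose (C, γ) is a complete pseudometric space having the w*-uniform separation property in X*. Let f : C → ℝ ∪ {+∞} be any proper function bounded from below. Then there exists a σ-porous subset F of X such that for every x ∈ X \ F, the perturbed function p ↦ f(p) + ⟨p, x⟩ attains γ-strongly-directionally its infimum over C at some direction u ∈ C; i.e., every sequence (q_n) ⊆ C with f(q_n) + ⟨q_n, x⟩ → inf_C (f + x̂) satisfies γ(q_n, u) → 0. -/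
/-!
Call `x` bad at scale `ε` if no sublevel set `{f + x̂ < inf (f + x̂) + δ}` has `γ`-diameter at
most `2ε`. Off the union of the bad sets the sublevel sets shrink, so a minimizing sequence is
`γ`-Cauchy and its limit `u` attracts every minimizing sequence.

The bad set at scale `ε` is porous. Take a near minimizer `p` of `f + x̂` and the direction `v`
that the w*-USP attaches to `p`. Tilting further by `-(r/2) v` raises `f + x̂` at every `q` with
`γ(q, p) ≥ ε` by at least `rϖ/2` more than at `p`. With `D` a norm bound of `C`, this survives
up to an error `2 D l r ≤ rϖ/8` on the ball of radius `l r` around `x - (r/2) v`, and it exceeds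
the slack `rϖ/4` of two `rϖ/8`-minimizers. So all near minimizers there lie within `ε` of `p`.
-/

open Metric Set Filter
open scoped Topology

/-- A set is σ-porous if it is a countable union of porous sets. -/
def SigmaPorous {X : Type*} [MetricSpace X] (A : Set X) : Prop :=
  ∃ s : ℕ → Set X, (∀ n, Porous (s n)) ∧ A = ⋃ n, s n

lemma EReal.lt_add_coe_of_pos {a : EReal} (hbot : a ≠ ⊥) (htop : a ≠ ⊤) {δ : ℝ} (hδ : 0 < δ) :
    a < a + δ := by
  lift a to ℝ using ⟨htop, hbot⟩
  exact_mod_cast lt_add_of_pos_right a hδ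

section SublevelSets

variable {α : Type*} {C : Set α} {γ : α → α → ℝ} {g : α → EReal}

def HasSmallSublevelSet (C : Set α) (γ : α → α → ℝ) (g : α → EReal) (ε : ℝ) : Prop :=
  ∃ δ > (0 : ℝ), ∀ p ∈ C, ∀ q ∈ C,
    g p < sInf (g '' C) + δ → g q < sInf (g '' C) + δ → γ p q ≤ ε

lemma HasSmallSublevelSet.mono {ε ε' : ℝ} (h : HasSmallSublevelSet C γ g ε) (hε : ε ≤ ε') :
    HasSmallSublevelSet C γ g ε' := by
  obtain ⟨δ, hδ, hdiam⟩ := h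
  exact ⟨δ, hδ, fun p hp q hq hgp hgq => (hdiam p hp q hq hgp hgq).trans hε⟩

lemma exists_seq_mem_tendsto_sInf_image (hC : C.Nonempty) :
    ∃ p : ℕ → α, (∀ n, p n ∈ C) ∧ Tendsto (fun n => g (p n)) atTop (𝓝 (sInf (g '' C))) := by
  obtain ⟨b, -, hb, hbmem⟩ := exists_seq_tendsto_sInf (hC.image g) (OrderBot.bddBelow _)
  choose p hpC hgp using hbmem
  exact ⟨p, hpC, by simpa only [hgp] using hb⟩

lemma nonneg_of_pseudometric (hγ0 : ∀ p ∈ C, γ p p = 0)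
    (hγsymm : ∀ p ∈ C, ∀ q ∈ C, γ p q = γ q p)
    (hγtri : ∀ p ∈ C, ∀ q ∈ C, ∀ r ∈ C, γ p q ≤ γ p r + γ r q)
    {p q : α} (hp : p ∈ C) (hq : q ∈ C) : 0 ≤ γ p q := by
  linarith [hγ0 p hp, hγtri p hp p hp q hq, hγsymm q hq p hp]

lemma le_of_tendsto_of_mem_sublevelSet {p : ℕ → α} {u q : α} {δ ε : ℝ}
    (hγtri : ∀ p ∈ C, ∀ q ∈ C, ∀ r ∈ C, γ p q ≤ γ p r + γ r q)
    (hpC : ∀ n, p n ∈ C) (hp : Tendsto (fun n => g (p n)) atTop (𝓝 (sInf (g '' C))))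
    (hpu : Tendsto (fun n => γ (p n) u) atTop (𝓝 0)) (hu : u ∈ C)
    (hI : sInf (g '' C) < sInf (g '' C) + δ)
    (hdiam : ∀ p ∈ C, ∀ q ∈ C, g p < sInf (g '' C) + δ → g q < sInf (g '' C) + δ → γ p q ≤ ε)
    (hq : q ∈ C) (hgq : g q < sInf (g '' C) + δ) : γ q u ≤ ε := by
  have hbound : Tendsto (fun n => ε + γ (p n) u) atTop (𝓝 ε) := by
    simpa using hpu.const_add ε
  refine ge_of_tendsto hbound ((hp.eventually_lt_const hI).mono fun n hgpn => ?_)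
  linarith [hγtri q hq u hu (p n) (hpC n), hdiam q hq (p n) (hpC n) hgq hgpn]

lemma lt_add_of_near_minimizers {h : α → ℝ} {p q : α} {η : ℝ}
    (hbot : sInf (g '' C) ≠ ⊥) (htop : sInf (g '' C) ≠ ⊤)
    (hp : p ∈ C) (hq : q ∈ C) (hgp : g p < sInf (g '' C) + η)
    (hghq : g q + h q < sInf ((fun a => g a + h a) '' C) + η) :
    h q < h p + 2 * η := by
  lift sInf (g '' C) to ℝ using ⟨htop, hbot⟩ with i hi
  have hchain : ((i + h q : ℝ) : EReal) < ((i + η + h p + η : ℝ) : EReal) :=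
    calc ((i + h q : ℝ) : EReal) = (i : EReal) + h q := EReal.coe_add _ _
      _ ≤ g q + h q := by gcongr; exact hi ▸ sInf_le (mem_image_of_mem g hq)
      _ < sInf ((fun a => g a + h a) '' C) + η := hghq
      _ ≤ g p + h p + η := by gcongr; exact sInf_le (mem_image_of_mem _ hp)
      _ < (i + η : ℝ) + h p + η := by
        refine EReal.add_lt_add_right_coe (EReal.add_lt_add_right_coe ?_ _) _
        exact_mod_cast hgp
      _ = ((i + η + h p + η : ℝ) : EReal) := by push_cast; rfl
  linarith [EReal.coe_lt_coe_iff.mp hchain]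

theorem exists_tendsto_of_forall_hasSmallSublevelSet
    (hγ0 : ∀ p ∈ C, γ p p = 0)
    (hγsymm : ∀ p ∈ C, ∀ q ∈ C, γ p q = γ q p)
    (hγtri : ∀ p ∈ C, ∀ q ∈ C, ∀ r ∈ C, γ p q ≤ γ p r + γ r q)
    (hcomplete : ∀ u : ℕ → α, (∀ n, u n ∈ C) →
      (∀ ε > (0 : ℝ), ∃ N : ℕ, ∀ m ≥ N, ∀ n ≥ N, γ (u m) (u n) < ε) →
      ∃ l ∈ C, Tendsto (fun n => γ (u n) l) atTop (𝓝 0))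
    (hbot : sInf (g '' C) ≠ ⊥) (htop : sInf (g '' C) ≠ ⊤)
    (hsmall : ∀ ε > 0, HasSmallSublevelSet C γ g ε) :
    ∃ u ∈ C, ∀ q : ℕ → α, (∀ n, q n ∈ C) →
      Tendsto (fun n => g (q n)) atTop (𝓝 (sInf (g '' C))) →
      Tendsto (fun n => γ (q n) u) atTop (𝓝 0) := by
  have hC : C.Nonempty := by
    by_contra hC
    exact htop (by simp [not_nonempty_iff_eq_empty.mp hC])
  obtain ⟨p, hpC, hp⟩ := exists_seq_mem_tendsto_sInf_image (g := g) hC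
  have hcauchy : ∀ ε > (0 : ℝ), ∃ N : ℕ, ∀ m ≥ N, ∀ n ≥ N, γ (p m) (p n) < ε := by
    intro ε hε
    obtain ⟨δ, hδ, hdiam⟩ := hsmall (ε / 2) (half_pos hε)
    obtain ⟨N, hN⟩ := eventually_atTop.mp
      (hp.eventually_lt_const (EReal.lt_add_coe_of_pos hbot htop hδ))
    exact ⟨N, fun m hm n hn => (hdiam _ (hpC m) _ (hpC n) (hN m hm) (hN n hn)).trans_lt
      (half_lt_self hε)⟩
  obtain ⟨u, hu, hpu⟩ := hcomplete p hpC hcauchy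
  refine ⟨u, hu, fun q hqC hq => ?_⟩
  refine tendsto_order.2 ⟨fun a ha => Eventually.of_forall fun n =>
    ha.trans_le (nonneg_of_pseudometric hγ0 hγsymm hγtri (hqC n) hu), fun ε hε => ?_⟩
  obtain ⟨δ, hδ, hdiam⟩ := hsmall (ε / 2) (half_pos hε)
  have hI := EReal.lt_add_coe_of_pos hbot htop hδ
  filter_upwards [hq.eventually_lt_const hI] with n hgqn
  exact (le_of_tendsto_of_mem_sublevelSet hγtri hpC hp hpu hu hI hdiam (hqC n) hgqn).trans_lt
    (half_lt_self hε)

end SublevelSets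

section Tilt

variable {X : Type*} [NormedAddCommGroup X] [NormedSpace ℝ X]
  {C : Set (StrongDual ℝ X)} {f : StrongDual ℝ X → EReal}

lemma add_mul_le_apply_of_separates {p q : StrongDual ℝ X} {v w : X} {D ρ ϖ t : ℝ}
    (hp : ‖p‖ ≤ D) (hq : ‖q‖ ≤ D) (hw : ‖w‖ ≤ ρ) (ht : 0 ≤ t) (hsep : q v ≤ p v - ϖ) :
    p (w - t • v) + t * ϖ ≤ q (w - t • v) + 2 * D * ρ := by
  have hD : 0 ≤ D := (norm_nonneg p).trans hp
  have hpw := (abs_le.mp (p.le_of_opNorm_le hp w)).2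
  have hqw := (abs_le.mp (q.le_of_opNorm_le hq w)).1
  have hDw : D * ‖w‖ ≤ D * ρ := mul_le_mul_of_nonneg_left hw hD
  simp only [map_sub, map_smul, smul_eq_mul]
  nlinarith

noncomputable def tilt (f : StrongDual ℝ X → EReal) (x : X) (p : StrongDual ℝ X) : EReal :=
  f p + (p x : ℝ)

lemma tilt_eq_tilt_add (x z : X) : tilt f z = fun p => tilt f x p + (p (z - x) : ℝ) := by
  ext p
  rw [tilt, tilt, add_assoc, ← EReal.coe_add, map_sub, add_sub_cancel]

lemma sInf_tilt_ne_bot {D m : ℝ} (hD : ∀ p ∈ C, ‖p‖ ≤ D) (hm : ∀ p ∈ C, (m : EReal) ≤ f p)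
    (x : X) : sInf (tilt f x '' C) ≠ ⊥ := by
  refine ne_bot_of_le_ne_bot (EReal.coe_ne_bot (m + -(D * ‖x‖))) (le_sInf ?_)
  rintro _ ⟨p, hp, rfl⟩
  rw [tilt, EReal.coe_add]
  have hpx : -(D * ‖x‖) ≤ p x := (abs_le.mp (p.le_of_opNorm_le (hD p hp) x)).1
  exact add_le_add (hm p hp) (EReal.coe_le_coe_iff.mpr hpx)

lemma sInf_tilt_ne_top {p₀ : StrongDual ℝ X} (hp₀ : p₀ ∈ C) (hf : f p₀ ≠ ⊤) (x : X) :
    sInf (tilt f x '' C) ≠ ⊤ :=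
  ne_top_of_le_ne_top (EReal.add_lt_top hf (EReal.coe_ne_top _)).ne
    (sInf_le (mem_image_of_mem _ hp₀))

lemma sub_lt_apply_of_tilt_lt {p q : StrongDual ℝ X} {x z v : X} {D ρ ϖ t η : ℝ}
    (hbot : sInf (tilt f x '' C) ≠ ⊥) (htop : sInf (tilt f x '' C) ≠ ⊤)
    (hD : ∀ p ∈ C, ‖p‖ ≤ D) (hp : p ∈ C) (hq : q ∈ C) (ht : 0 ≤ t)
    (hz : ‖z - (x - t • v)‖ ≤ ρ) (hbudget : 2 * D * ρ + 2 * η ≤ t * ϖ)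
    (hpx : tilt f x p < sInf (tilt f x '' C) + η) (hqz : tilt f z q < sInf (tilt f z '' C) + η) :
    p v - ϖ < q v := by
  by_contra! hsep
  have hsep' := add_mul_le_apply_of_separates (hD p hp) (hD q hq) hz ht hsep
  rw [show z - (x - t • v) - t • v = z - x by abel] at hsep'
  rw [tilt_eq_tilt_add x z] at hqz
  linarith [lt_add_of_near_minimizers (h := fun p => p (z - x)) hbot htop hp hq hpx hqz]

theorem porous_setOf_not_hasSmallSublevelSet_tilt {γ : StrongDual ℝ X → StrongDual ℝ X → ℝ}
    {D ε ϖ : ℝ} (hD0 : 0 < D) (hD : ∀ p ∈ C, ‖p‖ ≤ D)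
    (hγsymm : ∀ p ∈ C, ∀ q ∈ C, γ p q = γ q p)
    (hγtri : ∀ p ∈ C, ∀ q ∈ C, ∀ r ∈ C, γ p q ≤ γ p r + γ r q)
    (hbot : ∀ x, sInf (tilt f x '' C) ≠ ⊥) (htop : ∀ x, sInf (tilt f x '' C) ≠ ⊤) (hϖ : 0 < ϖ)
    (hsep : ∀ p ∈ C, ∃ v : X, ‖v‖ ≤ 1 ∧ ∀ q ∈ C, ε ≤ γ q p → q v ≤ p v - ϖ) :
    Porous {x | ¬ HasSmallSublevelSet C γ (tilt f x) (2 * ε)} := by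
  set l := min (ϖ / (16 * D)) (1 / 2)
  have hl0 : 0 < l := lt_min (by positivity) (by norm_num)
  have hl : l ≤ 1 / 2 := min_le_right _ _
  have hDl : 2 * D * l ≤ ϖ / 8 := by
    have hle : D * l ≤ D * (ϖ / (16 * D)) := mul_le_mul_of_nonneg_left (min_le_left _ _) hD0.le
    have heq : D * (ϖ / (16 * D)) = ϖ / 16 := by field_simp
    linarith
  refine ⟨l, ⟨hl0, by linarith⟩, 1, one_pos, fun x r hr => ?_⟩
  have hr0 : 0 < r := hr.1
  have hη : 0 < r * ϖ / 8 := by positivity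
  obtain ⟨_, ⟨p, hp, rfl⟩, hpx⟩ :=
    sInf_lt_iff.mp (EReal.lt_add_coe_of_pos (hbot x) (htop x) hη)
  obtain ⟨v, hv, hvsep⟩ := hsep p hp
  refine ⟨x - (r / 2) • v, fun z hz => ⟨?_, ?_⟩⟩
  · have hvr : dist (x - (r / 2) • v) x ≤ r / 2 := by
      rw [dist_eq_norm, sub_sub_cancel_left, norm_neg, norm_smul,
        Real.norm_of_nonneg (by positivity)]
      exact mul_le_of_le_one_right (by positivity) hv
    calc dist z x ≤ dist z (x - (r / 2) • v) + dist (x - (r / 2) • v) x := dist_triangle _ _ _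
      _ < l * r + r / 2 := add_lt_add_of_lt_of_le hz hvr
      _ ≤ r := by nlinarith
  · have hclose : ∀ q ∈ C, tilt f z q < sInf (tilt f z '' C) + ((r * ϖ / 8 : ℝ) : EReal) →
        γ q p < ε := fun q hq hqz => lt_of_not_ge fun hε =>
      (sub_lt_apply_of_tilt_lt (t := r / 2) (hbot x) (htop x) hD hp hq (by positivity)
        (mem_ball_iff_norm.mp hz).le (by nlinarith [mul_le_mul_of_nonneg_right hDl hr0.le])
        hpx hqz).not_ge (hvsep q hq hε)
    refine not_not.2 ⟨r * ϖ / 8, hη, fun q hq q' hq' hqz hq'z => ?_⟩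
    linarith [hγtri q hq q' hq' p hp, hγsymm p hp q' hq', hclose q hq hqz, hclose q' hq' hq'z]

end Tilt

theorem linear_variational_principle_general
    {X : Type*} [NormedAddCommGroup X] [NormedSpace ℝ X]
    (C : Set (StrongDual ℝ X))
    (γ : StrongDual ℝ X → StrongDual ℝ X → ℝ)
    (hbdd : ∃ D : ℝ, ∀ p ∈ C, ‖p‖ ≤ D)
    (hγ0 : ∀ p ∈ C, γ p p = 0)
    (hγsymm : ∀ p ∈ C, ∀ q ∈ C, γ p q = γ q p)
    (hγtri : ∀ p ∈ C, ∀ q ∈ C, ∀ r ∈ C, γ p q ≤ γ p r + γ r q)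
    (hcomplete : ∀ u : ℕ → StrongDual ℝ X, (∀ n, u n ∈ C) →
      (∀ ε > (0 : ℝ), ∃ N : ℕ, ∀ m ≥ N, ∀ n ≥ N, γ (u m) (u n) < ε) →
      ∃ l ∈ C, Tendsto (fun n => γ (u n) l) atTop (nhds 0))
    (hUSP : ∃ a > (0 : ℝ), ∀ ε ∈ Set.Ioc (0 : ℝ) a, ∃ ϖ > (0 : ℝ), ∀ p ∈ C,
      ∃ x : X, ‖x‖ ≤ 1 ∧ ∀ q ∈ C, ε ≤ γ q p → q x ≤ p x - ϖ)
    (f : StrongDual ℝ X → EReal)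
    (hproper : ∃ p ∈ C, f p ≠ ⊤)
    (hbelow : ∃ m : ℝ, ∀ p ∈ C, (m : EReal) ≤ f p) :
    ∃ F : Set X, SigmaPorous F ∧ ∀ x ∉ F, ∃ u ∈ C,
      ∀ q : ℕ → StrongDual ℝ X, (∀ n, q n ∈ C) →
        Tendsto (fun n => f (q n) + ((q n x : ℝ) : EReal)) atTop
          (nhds (sInf ((fun p => f p + ((p x : ℝ) : EReal)) '' C))) →
        Tendsto (fun n => γ (q n) u) atTop (nhds 0) := by
  obtain ⟨D, hD⟩ := hbdd
  obtain ⟨a, ha, hUSP⟩ := hUSP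
  obtain ⟨p₀, hp₀, hfp₀⟩ := hproper
  obtain ⟨m, hm⟩ := hbelow
  have hbot := sInf_tilt_ne_bot hD hm
  have htop := sInf_tilt_ne_top hp₀ hfp₀
  have hscale (n : ℕ) : a / (n + 1) ∈ Ioc 0 a :=
    ⟨by positivity, div_le_self ha.le (by linarith [n.cast_nonneg (α := ℝ)])⟩
  choose ϖ hϖ hsep using fun n => hUSP _ (hscale n)
  refine ⟨⋃ n : ℕ, {x | ¬ HasSmallSublevelSet C γ (tilt f x) (2 * (a / (n + 1)))},
    ⟨_, fun n => porous_setOf_not_hasSmallSublevelSet_tilt (zero_lt_one.trans_le (le_max_right D 1))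
      (fun p hp => (hD p hp).trans (le_max_left D 1)) hγsymm hγtri hbot htop (hϖ n) (hsep n), rfl⟩,
    fun x hx => ?_⟩
  simp only [mem_iUnion, mem_ofPred_eq, not_exists, not_not] at hx
  refine exists_tendsto_of_forall_hasSmallSublevelSet hγ0 hγsymm hγtri hcomplete
    (hbot x) (htop x) fun ε hε => ?_
  obtain ⟨n, hn⟩ := exists_nat_one_div_lt (show 0 < ε / (2 * a) by positivity)
  rw [lt_div_iff₀ (by positivity)] at hn
  exact (hx n).mono (by linarith [show 2 * (a / (n + 1)) = 1 / (n + 1) * (2 * a) by ring])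

/-- the linear variational principle. For a norm-bounded `C ⊆ X*` which is a complete
pseudometric space with the w*-USP and any proper bounded-below `f : C → ℝ ∪ {+∞}`, there is a
σ-porous `F ⊆ X` such that for `x ∉ F`, the function `p ↦ f(p) + ⟨p,x⟩` attains
γ-strongly-directionally its infimum over `C` at some direction `u ∈ C`. -/
theorem linear_variational_principle
    {X : Type*} [NormedAddCommGroup X] [NormedSpace ℝ X] [CompleteSpace X]
    (C : Set (StrongDual ℝ X))
    (γ : StrongDual ℝ X → StrongDual ℝ X → ℝ)
    (hbdd : ∃ D : ℝ, ∀ p ∈ C, ‖p‖ ≤ D)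
    (hγ0 : ∀ p ∈ C, γ p p = 0)
    (hγsymm : ∀ p ∈ C, ∀ q ∈ C, γ p q = γ q p)
    (hγtri : ∀ p ∈ C, ∀ q ∈ C, ∀ r ∈ C, γ p q ≤ γ p r + γ r q)
    (hcomplete : ∀ u : ℕ → StrongDual ℝ X, (∀ n, u n ∈ C) →
      (∀ ε > (0 : ℝ), ∃ N : ℕ, ∀ m ≥ N, ∀ n ≥ N, γ (u m) (u n) < ε) →
      ∃ l ∈ C, Tendsto (fun n => γ (u n) l) atTop (nhds 0))
    (hUSP : ∃ a > (0 : ℝ), ∀ ε ∈ Set.Ioc (0 : ℝ) a, ∃ ϖ > (0 : ℝ), ∀ p ∈ C,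
      ∃ x : X, ‖x‖ ≤ 1 ∧ ∀ q ∈ C, ε ≤ γ q p → q x ≤ p x - ϖ)
    (f : StrongDual ℝ X → EReal)
    (hproper : ∃ p ∈ C, f p ≠ ⊤)
    (hbelow : ∃ m : ℝ, ∀ p ∈ C, (m : EReal) ≤ f p) :
    ∃ F : Set X, SigmaPorous F ∧ ∀ x ∉ F, ∃ u ∈ C,
      ∀ q : ℕ → StrongDual ℝ X, (∀ n, q n ∈ C) →
        Tendsto (fun n => f (q n) + ((q n x : ℝ) : EReal)) atTop
          (nhds (sInf ((fun p => f p + ((p x : ℝ) : EReal)) '' C))) →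
        Tendsto (fun n => γ (q n) u) atTop (nhds 0) :=
  linear_variational_principle_general C γ hbdd hγ0 hγsymm hγtri hcomplete hUSP f hproper hbelow
end

section
/- Let (L, d) be a complete metric space and X a Banach space of bounded continuous real-valued functions on L with norm ‖·‖_X ≥ α‖·‖_∞ for some α > 0, satisfying hypothesis (H): for every ε > 0 there exists ϖ(ε) > 0 such that for every x ∈ L there is b ∈ B_X with b(x) - ϖ(ε) ≥ sup{b(y) : y ∈ L, d(y,x) ≥ ε}. Then for every proper, bounded-below, lower semicontinuous f : L → ℝ ∪ {+∞}, there exists a σ-porous subset F of X such that for every h ∈ X \ F, the function f + h has a strong minimum on L. -/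
open Metric Set Filter

/-!
For `ε > 0` call a perturbation `h` bad if, however small `δ > 0`, the `δ`-minimizers of `f + h`
contain two points at distance at least `ε`. For `h` outside the countable union of the bad sets
for `ε = 1/(n+1)`, every minimizing sequence of `f + h` is Cauchy; completeness and lower
semicontinuity then give a strong minimum. Each bad set is porous: if `x̄` is a `δ`-minimizer of
`f + h` and `b` is the function given by (H) at `x̄`, then for every `h'` close to `h - (r/2) b`
the dip of `-(r/2) b` at `x̄` traps all `δ`-minimizers of `f + h'` in the `ε/4`-ball around `x̄`.
-/

open scoped Topology BoundedContinuousFunction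

section StrongMinimum

variable {L : Type*} [MetricSpace L]

def IsStrongMin (φ : L → EReal) (x₀ : L) : Prop :=
  φ x₀ = sInf (range φ) ∧ ∀ xs : ℕ → L,
    Tendsto (fun n => φ (xs n)) atTop (𝓝 (sInf (range φ))) →
    Tendsto (fun n => dist (xs n) x₀) atTop (𝓝 0)

/-- `diam {x | φ x ≤ inf φ + δ} ≥ ε` for every `δ > 0`. -/
def ApproxMinimizersSpread (φ : L → EReal) (ε : ℝ) : Prop :=
  ∀ δ > (0 : ℝ), ∃ x z, φ x ≤ sInf (range φ) + δ ∧ φ z ≤ sInf (range φ) + δ ∧ ε ≤ dist x z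

theorem exists_isStrongMin_of_not_approxMinimizersSpread [CompleteSpace L] {φ : L → EReal}
    {c : ℝ} (hφ : LowerSemicontinuous φ) (hc : sInf (range φ) = c)
    (hspread : ∀ n : ℕ, ¬ ApproxMinimizersSpread φ (1 / (n + 1))) : ∃ x₀, IsStrongMin φ x₀ := by
  have hsmall : ∀ ε > 0, ∃ δ > (0 : ℝ), ∀ x z, φ x ≤ c + δ → φ z ≤ c + δ → dist x z < ε := by
    intro ε hε
    obtain ⟨n, hn⟩ := exists_nat_one_div_lt hε
    have := hspread n
    simp only [ApproxMinimizersSpread, hc, ← EReal.coe_add, not_forall, not_exists, not_and,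
      not_le] at this
    obtain ⟨δ, hδ, hδn⟩ := this
    exact ⟨δ, hδ, fun x z hx hz => (hδn x z hx hz).trans hn⟩
  have hnear : ∀ {ys : ℕ → L}, Tendsto (fun n => φ (ys n)) atTop (𝓝 c) →
      ∀ δ > (0 : ℝ), ∀ᶠ n in atTop, φ (ys n) ≤ c + δ := fun hys δ hδ =>
    (hys.eventually_lt_const (EReal.coe_lt_coe_iff.2 (lt_add_of_pos_right c hδ))).mono
      fun _ => le_of_lt
  have : Nonempty L := by
    obtain ⟨x, -⟩ := iInf_lt_iff.1
      (show iInf φ < ⊤ by rw [← sInf_range, hc]; exact EReal.coe_lt_top c)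
    exact ⟨x⟩
  obtain ⟨u, -, hu, hu_mem⟩ := exists_seq_tendsto_sInf (range_nonempty φ) (OrderBot.bddBelow _)
  choose xs hxs using hu_mem
  replace hu : Tendsto (fun n => φ (xs n)) atTop (𝓝 c) := by simpa only [hxs, hc] using hu
  have hcauchy : CauchySeq xs := Metric.cauchySeq_iff'.2 fun ε hε => by
    obtain ⟨δ, hδ, hδε⟩ := hsmall ε hε
    obtain ⟨N, hN⟩ := eventually_atTop.1 (hnear hu δ hδ)
    exact ⟨N, fun n hn => hδε _ _ (hN n hn) (hN N le_rfl)⟩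
  obtain ⟨x₀, hx₀⟩ := cauchySeq_tendsto_of_complete hcauchy
  have hφx₀ : φ x₀ = c := by
    refine le_antisymm (le_of_forall_gt_imp_ge_of_dense fun a ha => ?_)
      (hc ▸ sInf_le (mem_range_self x₀))
    exact (hφ.isClosed_preimage a).mem_of_tendsto hx₀
      ((hu.eventually_lt_const ha).mono fun _ => le_of_lt)
  refine ⟨x₀, hc ▸ hφx₀, fun ys hys => ?_⟩
  rw [hc] at hys
  rw [← tendsto_iff_dist_tendsto_zero]
  refine Metric.tendsto_nhds.2 fun ε hε => ?_
  obtain ⟨δ, hδ, hδε⟩ := hsmall ε hε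
  filter_upwards [hnear hys δ hδ] with n hn
  exact hδε _ _ hn (by rw [hφx₀]; exact EReal.coe_le_coe_iff.2 (le_add_of_nonneg_right hδ.le))

end StrongMinimum

theorem LowerSemicontinuous.add_coe_of_continuous {L : Type*} [TopologicalSpace L]
    {f : L → EReal} (hf : LowerSemicontinuous f) {g : L → ℝ} (hg : Continuous g) :
    LowerSemicontinuous fun x => f x + (g x : EReal) :=
  hf.add' (continuous_coe_real_ereal.comp hg).lowerSemicontinuous fun _ =>
    EReal.continuousAt_add (Or.inr (EReal.coe_ne_bot _)) (Or.inr (EReal.coe_ne_top _))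

theorem exists_sInf_range_add_eq_coe {L : Type*} [TopologicalSpace L] {f : L → EReal} {m : ℝ}
    (hm : ∀ x, (m : EReal) ≤ f x) {x₁ : L} (hx₁ : f x₁ ≠ ⊤) (g : L →ᵇ ℝ) :
    ∃ c : ℝ, sInf (range fun x => f x + (g x : EReal)) = c := by
  have hlower : ∀ x, ((m - ‖g‖ : ℝ) : EReal) ≤ f x + g x := fun x => by
    rw [sub_eq_add_neg, EReal.coe_add]
    gcongr
    · exact hm x
    · exact neg_le_of_abs_le (g.norm_coe_le_norm x)
  have hne_bot : sInf (range fun x => f x + (g x : EReal)) ≠ ⊥ :=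
    ne_bot_of_le_ne_bot (EReal.coe_ne_bot _) (le_sInf (forall_mem_range.2 hlower))
  have hne_top : sInf (range fun x => f x + (g x : EReal)) ≠ ⊤ :=
    ((sInf_le (mem_range_self x₁)).trans_lt (EReal.add_lt_top hx₁ (EReal.coe_ne_top _))).ne
  exact ⟨_, (EReal.coe_toReal hne_top hne_bot).symm⟩

theorem dist_lt_of_add_le_add_bump {L : Type*} [MetricSpace L] {φ : L → EReal} {β ψ : L → ℝ}
    {c s t w η ε : ℝ} {xb u : L} (hc : ∀ x, (c : EReal) ≤ φ x) (hxb : φ xb ≤ c + s)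
    (hβ : ∀ y, ε ≤ dist y xb → β y ≤ β xb - w) (hψ : ∀ x, |ψ x + t * β x| ≤ η) (ht : 0 ≤ t)
    (hgap : 2 * s + 2 * η < t * w) (hu : φ u + ψ u ≤ φ xb + ψ xb + s) : dist u xb < ε := by
  by_contra! hfar
  have key : ((c + ψ u : ℝ) : EReal) ≤ ((c + s + ψ xb + s : ℝ) : EReal) :=
    calc ((c + ψ u : ℝ) : EReal) = c + ψ u := EReal.coe_add _ _
      _ ≤ φ u + ψ u := by gcongr; exact hc u
      _ ≤ φ xb + ψ xb + s := hu
      _ ≤ (c : EReal) + s + ψ xb + s := by gcongr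
      _ = ((c + s + ψ xb + s : ℝ) : EReal) := by norm_cast
  have hβu := mul_le_mul_of_nonneg_left (hβ u hfar) ht
  linarith [EReal.coe_le_coe_iff.1 key, abs_le.1 (hψ u), abs_le.1 (hψ xb)]

section Perturbation

variable {L X : Type*} [MetricSpace L] [NormedAddCommGroup X] [NormedSpace ℝ X]
  {j : X →ₗ[ℝ] L →ᵇ ℝ} {α : ℝ}

theorem abs_apply_le_norm_div (hα : 0 < α) (hnorm : ∀ h : X, α * ‖j h‖ ≤ ‖h‖) (v : X) (x : L) :
    |j v x| ≤ ‖v‖ / α := by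
  rw [le_div_iff₀ hα, mul_comm, ← Real.norm_eq_abs]
  exact (mul_le_mul_of_nonneg_left ((j v).norm_coe_le_norm x) hα.le).trans (hnorm v)

theorem porous_setOf_approxMinimizersSpread {f : L → EReal} (hα : 0 < α)
    (hnorm : ∀ h : X, α * ‖j h‖ ≤ ‖h‖) {ε : ℝ} (hε : 0 < ε)
    (hbump : ∃ ϖ > (0 : ℝ), ∀ x : L, ∃ b : X, ‖b‖ ≤ 1 ∧
      ∀ y : L, ε / 4 ≤ dist y x → j b y ≤ j b x - ϖ)
    (hinf : ∀ h : X, ∃ c : ℝ, sInf (range fun x => f x + (j h x : EReal)) = c) :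
    Porous {h : X | ApproxMinimizersSpread (fun x => f x + (j h x : EReal)) ε} := by
  obtain ⟨ϖ, hϖ, hbump⟩ := hbump
  set l := min (1 / 2 : ℝ) (α * ϖ / 16)
  refine ⟨l, ⟨by positivity, (min_le_left _ _).trans (by norm_num)⟩, 1, one_pos, fun h r hr => ?_⟩
  obtain ⟨c, hc⟩ := hinf h
  have hr : 0 < r := hr.1
  have hs : 0 < r * ϖ / 8 := by positivity
  obtain ⟨xb, hxb⟩ : ∃ xb, f xb + (j h xb : EReal) < c + (r * ϖ / 8 : ℝ) := by
    rw [← iInf_lt_iff, ← sInf_range, hc]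
    exact_mod_cast lt_add_of_pos_right c hs
  obtain ⟨b, hb, hbxb⟩ := hbump xb
  refine ⟨h - (r / 2) • b, fun h' hh' => ⟨ball_subset_ball' ?_ hh', fun hspread => ?_⟩⟩
  · rw [dist_self_sub_left, norm_smul, Real.norm_of_nonneg (by positivity)]
    nlinarith [min_le_left (1 / 2 : ℝ) (α * ϖ / 16)]
  obtain ⟨x, z, hx, hz, hxz⟩ := hspread (r * ϖ / 8) hs
  have hsplit : ∀ u, f u + (j h' u : EReal) = (f u + j h u) + (j (h' - h) u : ℝ) := fun u => by
    rw [add_assoc, ← EReal.coe_add, map_sub, BoundedContinuousFunction.coe_sub, Pi.sub_apply,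
      add_sub_cancel]
  have hdev : ∀ u, |j (h' - h) u + r / 2 * j b u| ≤ r * ϖ / 16 := fun u => by
    have heq : j (h' - h) u + r / 2 * j b u = j (h' - (h - (r / 2) • b)) u := by
      simp only [map_sub, map_smul, BoundedContinuousFunction.coe_sub,
        BoundedContinuousFunction.coe_smul, Pi.sub_apply, smul_eq_mul]
      ring
    rw [heq]
    refine (abs_apply_le_norm_div hα hnorm _ u).trans ?_
    rw [div_le_iff₀ hα]
    have hdist : ‖h' - (h - (r / 2) • b)‖ < l * r := mem_ball_iff_norm.1 hh'
    nlinarith [min_le_right (1 / 2 : ℝ) (α * ϖ / 16)]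
  have hnear : ∀ u, f u + (j h' u : EReal) ≤ sInf (range fun x => f x + (j h' x : EReal)) +
      (r * ϖ / 8 : ℝ) → dist u xb < ε / 4 := fun u hu => by
    refine dist_lt_of_add_le_add_bump (φ := fun x => f x + (j h x : EReal)) (c := c)
      (fun x => hc ▸ sInf_le (mem_range_self x)) hxb.le hbxb hdev (by positivity) ?_ ?_
    · nlinarith
    · rw [← hsplit, ← hsplit]
      exact hu.trans (by gcongr; exact sInf_le (mem_range_self xb))
  linarith [dist_triangle_right x z xb, hnear x hx, hnear z hz]

end Perturbation

theorem deville_revalski_extension_general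
    {L : Type*} [MetricSpace L] [CompleteSpace L]
    {X : Type*} [NormedAddCommGroup X] [NormedSpace ℝ X]
    (j : X →ₗ[ℝ] BoundedContinuousFunction L ℝ)
    (α : ℝ) (hα : 0 < α) (hnorm : ∀ h : X, α * ‖j h‖ ≤ ‖h‖)
    (hH : ∀ ε > (0 : ℝ), ∃ ϖ > (0 : ℝ), ∀ x : L, ∃ b : X, ‖b‖ ≤ 1 ∧
      ∀ y : L, ε ≤ dist y x → j b y ≤ j b x - ϖ)
    (f : L → EReal)
    (hproper : ∃ x : L, f x ≠ ⊤)
    (hbelow : ∃ m : ℝ, ∀ x : L, (m : EReal) ≤ f x)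
    (hlsc : LowerSemicontinuous f) :
    ∃ F : Set X, SigmaPorous F ∧ ∀ h ∉ F, ∃ x₀ : L,
      (f x₀ + ((j h x₀ : ℝ) : EReal) = sInf (Set.range fun x => f x + ((j h x : ℝ) : EReal))) ∧
      ∀ xs : ℕ → L,
        Tendsto (fun n => f (xs n) + ((j h (xs n) : ℝ) : EReal)) atTop
          (nhds (sInf (Set.range fun x => f x + ((j h x : ℝ) : EReal)))) →
        Tendsto (fun n => dist (xs n) x₀) atTop (nhds 0) := by
  obtain ⟨x₁, hx₁⟩ := hproper
  obtain ⟨m, hm⟩ := hbelow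
  have hinf (h : X) := exists_sInf_range_add_eq_coe hm hx₁ (j h)
  let F (n : ℕ) := {h : X | ApproxMinimizersSpread (fun x => f x + (j h x : EReal)) (1 / (n + 1))}
  refine ⟨⋃ n, F n, ⟨F, fun n => ?_, rfl⟩, fun h hh => ?_⟩
  · exact porous_setOf_approxMinimizersSpread hα hnorm (by positivity) (hH _ (by positivity)) hinf
  · obtain ⟨c, hc⟩ := hinf h
    exact exists_isStrongMin_of_not_approxMinimizersSpread
      (hlsc.add_coe_of_continuous (j h).continuous) hc fun n hn => hh (mem_iUnion.2 ⟨n, hn⟩)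

/-- extension of the Deville–Revalski variational principle. `X` is a Banach space of
bounded continuous functions on a complete metric space `L` (realized by a linear map `j` into
`C_b(L)` with `‖·‖_X ≥ α ‖·‖_∞`) satisfying hypothesis (H). Then for every proper, bounded below,
lower semicontinuous `f : L → ℝ ∪ {+∞}`, off a σ-porous subset `F` of `X`, `f + h` has a strong
minimum on `L`. -/
theorem deville_revalski_extension
    {L : Type*} [MetricSpace L] [CompleteSpace L]
    {X : Type*} [NormedAddCommGroup X] [NormedSpace ℝ X] [CompleteSpace X]
    (j : X →ₗ[ℝ] BoundedContinuousFunction L ℝ)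
    (hinj : Function.Injective j)
    (α : ℝ) (hα : 0 < α) (hnorm : ∀ h : X, α * ‖j h‖ ≤ ‖h‖)
    (hH : ∀ ε > (0 : ℝ), ∃ ϖ > (0 : ℝ), ∀ x : L, ∃ b : X, ‖b‖ ≤ 1 ∧
      ∀ y : L, ε ≤ dist y x → j b y ≤ j b x - ϖ)
    (f : L → EReal)
    (hproper : ∃ x : L, f x ≠ ⊤)
    (hbelow : ∃ m : ℝ, ∀ x : L, (m : EReal) ≤ f x)
    (hlsc : LowerSemicontinuous f) :
    ∃ F : Set X, SigmaPorous F ∧ ∀ h ∉ F, ∃ x₀ : L,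
      (f x₀ + ((j h x₀ : ℝ) : EReal) = sInf (Set.range fun x => f x + ((j h x : ℝ) : EReal))) ∧
      ∀ xs : ℕ → L,
        Tendsto (fun n => f (xs n) + ((j h (xs n) : ℝ) : EReal)) atTop
          (nhds (sInf (Set.range fun x => f x + ((j h x : ℝ) : EReal)))) →
        Tendsto (fun n => dist (xs n) x₀) atTop (nhds 0) :=
  deville_revalski_extension_general j α hα hnorm hH f hproper hbelow hlsc
end

section
/- Let (K,d) be a complete metric space, Y a Banach space, and Z ⊆ C_b(K,Y) a Banach space with ‖·‖_Z ≥ ‖·‖_∞ satisfying condition (b) of Lemma: for every ε > 0 there exist ϖ_K(ε) > 0 and functions b_{x,ε} ∈ C_b(K,ℝ) with b_{x,ε}·e ∈ Z, ‖b_{x,ε}·e‖_Z ≤ 1 for all e ∈ S_Y, and b_{x,ε}(x) - ϖ_K(ε) ≥ sup{|b_{x,ε}(x')| : d(x',x) ≥ ε}. Then the set C_K = {y* ∘ δ_x : x ∈ K, y* ∈ S_{Y*}} ⊆ Z* with the pseudometric γ(y*∘δ_x, z*∘δ_{x'}) := d(x,x') has the w*-uniform separation property in Z* with modulus ϖ_K(ε)/2.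 -/
/-! Given `x`, `y*` and `ε`, pick a unit vector `e` at which `y*` nearly attains its norm,
`y* e > 1 - ϖ_K(ε)/2`, and let `T` be the element of `B_Z` represented by `b_{x,ε} · e`.
Then `⟨z* ∘ δ_{x'}, T⟩ = b_{x,ε}(x') z*(e) ≤ |b_{x,ε}(x')| ≤ b_{x,ε}(x) - ϖ_K(ε)` for far points
`x'`, while `⟨y* ∘ δ_x, T⟩ = b_{x,ε}(x) y*(e) ≥ b_{x,ε}(x) - ϖ_K(ε)/2` because
`b_{x,ε}(x) ≤ ‖T‖ ≤ 1`, and `b_{x,ε}(x) ≥ 0` as soon as some far point `x'` exists. -/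

section NormingVectors

variable {E : Type*} [NormedAddCommGroup E] [NormedSpace ℝ E]

theorem StrongDual.exists_norm_eq_one_lt_abs_apply (f : StrongDual ℝ E) {r : ℝ}
    (hr₀ : 0 ≤ r) (hr : r < ‖f‖) : ∃ u : E, ‖u‖ = 1 ∧ r < |f u| := by
  obtain ⟨x, hx1, hrx⟩ := f.exists_lt_apply_of_lt_opNorm hr
  have hx0 : 0 < ‖x‖ := norm_pos_iff.2 (by rintro rfl; simp at hrx; linarith)
  refine ⟨‖x‖⁻¹ • x, by simp [norm_smul, hx0.ne'], ?_⟩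
  rw [map_smul, smul_eq_mul, abs_mul, abs_inv, abs_norm]
  calc r < |f x| := hrx
    _ ≤ ‖x‖⁻¹ * |f x| := le_mul_of_one_le_left (abs_nonneg _) (one_le_inv₀ hx0 |>.2 hx1.le)

theorem StrongDual.exists_norm_eq_one_lt_apply (f : StrongDual ℝ E) {r : ℝ}
    (hr₀ : 0 ≤ r) (hr : r < ‖f‖) : ∃ e : E, ‖e‖ = 1 ∧ r < f e := by
  obtain ⟨u, hu, hru⟩ := f.exists_norm_eq_one_lt_abs_apply hr₀ hr
  rcases abs_cases (f u) with ⟨h, -⟩ | ⟨h, -⟩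
  · exact ⟨u, hu, h ▸ hru⟩
  · exact ⟨-u, by rwa [norm_neg], by rwa [map_neg, ← h]⟩

theorem StrongDual.abs_apply_le_of_norm_eq_one (f : StrongDual ℝ E) (hf : ‖f‖ = 1)
    {e : E} (he : ‖e‖ = 1) : |f e| ≤ 1 := by
  simpa [hf, he, Real.norm_eq_abs] using f.le_opNorm e

end NormingVectors

theorem CK_has_wstar_USP_general
    {K : Type*} [MetricSpace K]
    {Y : Type*} [NormedAddCommGroup Y] [NormedSpace ℝ Y]
    {Z : Type*} [NormedAddCommGroup Z] [NormedSpace ℝ Z]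
    (j : Z →ₗ[ℝ] BoundedContinuousFunction K Y)
    (hnorm : ∀ T : Z, ‖j T‖ ≤ ‖T‖)
    (ϖK : ℝ → ℝ)
    (hb : ∀ ε > (0 : ℝ), 0 < ϖK ε ∧ ∀ x : K,
      ∃ b : BoundedContinuousFunction K ℝ,
        (∀ e : Y, ‖e‖ = 1 → ∃ T : Z, ‖T‖ ≤ 1 ∧ ∀ x' : K, j T x' = b x' • e) ∧
        ∀ x' : K, ε ≤ dist x' x → |b x'| ≤ b x - ϖK ε) :
    ∀ ε > (0 : ℝ), ∀ (x : K) (y : StrongDual ℝ Y), ‖y‖ = 1 →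
      ∃ T : Z, ‖T‖ ≤ 1 ∧ ∀ (x' : K) (z : StrongDual ℝ Y), ‖z‖ = 1 →
        ε ≤ dist x' x → z (j T x') ≤ y (j T x) - ϖK ε / 2 := by
  intro ε hε x y hy
  obtain ⟨hϖ, hbx⟩ := hb ε hε
  obtain ⟨b, hbe, hbsep⟩ := hbx x
  -- `max _ 0`, since `ϖK ε` may exceed `2`
  obtain ⟨e, he, hye⟩ := y.exists_norm_eq_one_lt_apply (le_max_right (1 - ϖK ε / 2) 0)
    (max_lt (by rw [hy]; linarith) (by rw [hy]; exact one_pos))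
  obtain ⟨T, hT, hjT⟩ := hbe e he
  have hbx_le_one : b x ≤ 1 :=
    calc b x ≤ ‖j T x‖ := by rw [hjT, norm_smul, he, mul_one]; exact Real.le_norm_self _
      _ ≤ ‖T‖ := ((j T).norm_coe_le_norm x).trans (hnorm T)
      _ ≤ 1 := hT
  have hye' : 1 - ϖK ε / 2 < y e := (le_max_left _ _).trans_lt hye
  refine ⟨T, hT, fun x' z hz hd => ?_⟩
  simp only [hjT, map_smul, smul_eq_mul]
  calc b x' * z e ≤ |b x'| * |z e| := abs_mul (b x') (z e) ▸ le_abs_self _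
    _ ≤ |b x'| := mul_le_of_le_one_right (abs_nonneg _) (z.abs_apply_le_of_norm_eq_one hz he)
    _ ≤ b x - ϖK ε := hbsep x' hd
    _ ≤ b x * y e - ϖK ε / 2 := by nlinarith [abs_nonneg (b x'), hbsep x' hd]

/-- under condition (b) of Lemma property1, the set
`C_K = {y* ∘ δ_x : x ∈ K, y* ∈ S_{Y*}} ⊆ Z*` with the pseudometric
`γ(y*∘δ_x, z*∘δ_{x'}) = d(x,x')` has the w*-uniform separation property in `Z*` with modulus
`ϖ_K(ε)/2`, i.e. for every `ε > 0` and every `(x,y*) ∈ K × S_{Y*}` there is `T ∈ B_Z` with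
`⟨z*∘δ_{x'}, T⟩ ≤ ⟨y*∘δ_x, T⟩ - ϖ_K(ε)/2` whenever `d(x',x) ≥ ε`. -/
theorem CK_has_wstar_USP
    {K : Type*} [MetricSpace K] [CompleteSpace K]
    {Y : Type*} [NormedAddCommGroup Y] [NormedSpace ℝ Y] [CompleteSpace Y]
    {Z : Type*} [NormedAddCommGroup Z] [NormedSpace ℝ Z] [CompleteSpace Z]
    (j : Z →ₗ[ℝ] BoundedContinuousFunction K Y)
    (hinj : Function.Injective j)
    (hnorm : ∀ T : Z, ‖j T‖ ≤ ‖T‖)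
    (ϖK : ℝ → ℝ)
    (hb : ∀ ε > (0 : ℝ), 0 < ϖK ε ∧ ∀ x : K,
      ∃ b : BoundedContinuousFunction K ℝ,
        (∀ e : Y, ‖e‖ = 1 → ∃ T : Z, ‖T‖ ≤ 1 ∧ ∀ x' : K, j T x' = b x' • e) ∧
        ∀ x' : K, ε ≤ dist x' x → |b x'| ≤ b x - ϖK ε) :
    ∀ ε > (0 : ℝ), ∀ (x : K) (y : StrongDual ℝ Y), ‖y‖ = 1 →
      ∃ T : Z, ‖T‖ ≤ 1 ∧ ∀ (x' : K) (z : StrongDual ℝ Y), ‖z‖ = 1 →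
        ε ≤ dist x' x → z (j T x') ≤ y (j T x) - ϖK ε / 2 :=
  CK_has_wstar_USP_general j hnorm ϖK hb
end

section
/- Let X be a Banach space with property (α), witnessed by families {x_λ} ⊆ X and {x*_λ} ⊆ X* and constant ρ ∈ (0,1). Let K be the norm closure of {x_λ : λ ∈ Λ}. Then for every ε ∈ (0, some a] there exists ϖ(ε) > 0 such that for every x ∈ K there exists b ∈ {x*_λ} ⊆ S_{X*} with ⟨b, x⟩ - ϖ(ε) ≥ sup{|⟨b, x'⟩| : x' ∈ K, ‖x' - x‖ ≥ ε}. -/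
/-!
A norm-one functional `x*_λ` with `x*_λ(x_λ) = 1` and `|x*_λ(x_μ)| ≤ ρ` forces
`‖x_λ - x_μ‖ ≥ 1 - ρ`, so the points `x_λ` are uniformly separated and their range is already
closed: `K = {x_λ}`. For `x = x_λ` and `x' = x_μ ≠ x` the functional `x*_λ` then works with
`ϖ = 1 - ρ`, for every `ε > 0`.
-/

open Metric Set

lemma ContinuousLinearMap.one_sub_le_dist_of_apply_eq_one {E : Type*} [SeminormedAddCommGroup E]
    [NormedSpace ℝ E] {f : StrongDual ℝ E} (hf : ‖f‖ ≤ 1) {x y : E} {ρ : ℝ}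
    (hx : f x = 1) (hy : |f y| ≤ ρ) : 1 - ρ ≤ dist x y :=
  calc 1 - ρ ≤ f x - f y := by linarith [le_abs_self (f y)]
    _ = f (x - y) := (map_sub f x y).symm
    _ ≤ ‖f (x - y)‖ := Real.le_norm_self _
    _ ≤ 1 * ‖x - y‖ := f.le_of_opNorm_le hf _
    _ = dist x y := by rw [one_mul, dist_eq_norm]

section Biorthogonal

variable {X : Type*} [NormedAddCommGroup X] [NormedSpace ℝ X] {Λ : Type*}
  {xl : Λ → X} {xs : Λ → StrongDual ℝ X} {ρ : ℝ}

lemma pairwise_one_sub_le_dist_of_almost_biorthogonal (hnorm : ∀ l, ‖xs l‖ ≤ 1)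
    (hdiag : ∀ l, xs l (xl l) = 1) (hoff : ∀ l m, l ≠ m → |xs l (xl m)| ≤ ρ) :
    Pairwise fun l m => 1 - ρ ≤ dist (xl l) (xl m) := fun l m hlm =>
  ContinuousLinearMap.one_sub_le_dist_of_apply_eq_one (hnorm l) (hdiag l) (hoff l m hlm)

lemma isClosed_range_of_almost_biorthogonal (hρ : ρ < 1) (hnorm : ∀ l, ‖xs l‖ ≤ 1)
    (hdiag : ∀ l, xs l (xl l) = 1) (hoff : ∀ l m, l ≠ m → |xs l (xl m)| ≤ ρ) :
    IsClosed (range xl) :=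
  isClosed_of_pairwise_le_dist (sub_pos.2 hρ)
    (pairwise_one_sub_le_dist_of_almost_biorthogonal hnorm hdiag hoff).range_pairwise

end Biorthogonal

theorem property_alpha_separation_general
    {X : Type*} [NormedAddCommGroup X] [NormedSpace ℝ X]
    {Λ : Type*} (xl : Λ → X) (xs : Λ → StrongDual ℝ X)
    (ρ : ℝ) (hρ : 0 < ρ ∧ ρ < 1)
    (h1 : ∀ l : Λ, ‖xl l‖ = 1 ∧ ‖xs l‖ = 1 ∧ xs l (xl l) = 1)
    (h2 : ∀ l m : Λ, l ≠ m → |xs l (xl m)| ≤ ρ) :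
    ∃ a > (0 : ℝ), ∀ ε ∈ Set.Ioc (0 : ℝ) a, ∃ ϖ > (0 : ℝ),
      ∀ x ∈ closure (Set.range xl), ∃ l : Λ,
        ∀ x' ∈ closure (Set.range xl), ε ≤ ‖x' - x‖ →
          |xs l x'| ≤ xs l x - ϖ := by
  have hdiag (l : Λ) : xs l (xl l) = 1 := (h1 l).2.2
  have hK : closure (range xl) = range xl :=
    (isClosed_range_of_almost_biorthogonal hρ.2 (fun l => (h1 l).2.1.le) hdiag h2).closure_eq
  refine ⟨1, one_pos, fun ε hε => ⟨1 - ρ, sub_pos.2 hρ.2, ?_⟩⟩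
  rw [hK]
  rintro _ ⟨l, rfl⟩
  refine ⟨l, ?_⟩
  rintro _ ⟨m, rfl⟩ hεlm
  have hlm : l ≠ m := by
    rintro rfl
    rw [sub_self, norm_zero] at hεlm
    exact hε.1.not_ge hεlm
  calc |xs l (xl m)| ≤ ρ := h2 l m hlm
    _ = xs l (xl l) - (1 - ρ) := by rw [hdiag]; ring

/-- property (α) of Schachermayer yields the uniform separation estimate on
`K = closure {x_λ}`: for every small enough `ε > 0` there is `ϖ(ε) > 0` such that each `x ∈ K`
admits a functional `x*_λ` with `|⟨x*_λ, x'⟩| ≤ ⟨x*_λ, x⟩ - ϖ(ε)` for all `x' ∈ K` with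
`‖x' - x‖ ≥ ε`. -/
theorem property_alpha_separation
    {X : Type*} [NormedAddCommGroup X] [NormedSpace ℝ X] [CompleteSpace X]
    {Λ : Type*} (xl : Λ → X) (xs : Λ → StrongDual ℝ X)
    (ρ : ℝ) (hρ : 0 < ρ ∧ ρ < 1)
    (h1 : ∀ l : Λ, ‖xl l‖ = 1 ∧ ‖xs l‖ = 1 ∧ xs l (xl l) = 1)
    (h2 : ∀ l m : Λ, l ≠ m → |xs l (xl m)| ≤ ρ)
    (h3 : Metric.closedBall (0 : X) 1 ⊆ closure (absConvexHull ℝ (Set.range xl))) :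
    ∃ a > (0 : ℝ), ∀ ε ∈ Set.Ioc (0 : ℝ) a, ∃ ϖ > (0 : ℝ),
      ∀ x ∈ closure (Set.range xl), ∃ l : Λ,
        ∀ x' ∈ closure (Set.range xl), ε ≤ ‖x' - x‖ →
          |xs l x'| ≤ xs l x - ϖ :=
  property_alpha_separation_general xl xs ρ hρ h1 h2
end
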